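/- arXiv:1509.00760 — 6 statements merged into one kernel-verified Lean document; each statement's English description precedes it below -/
import Mathlib

section
/- Let c be a proper 3-coloring of H_k. If c(u_i) = c(v_i) for some index i with 0 ≤ i ≤ k, then c(u_j) = c(v_j) for all j with 0 ≤ j ≤ k. -/
open SimpleGraph

/-- Vertex type of `H_k`: the `u`'s, the `v`'s and the `w`'s. -/
abbrev HVert (k : ℕ) := Fin (k+1) ⊕ Fin (k+1) ⊕ Fin k

/-- The vertex `u_i`. -/
def uVert (k : ℕ) (i : Fin (k+1)) : HVert k := Sum.inl i

/-- The vertex `v_i`. -/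
def vVert (k : ℕ) (i : Fin (k+1)) : HVert k := Sum.inr (Sum.inl i)

/-- The vertex `w_{t+1}` (indexed by `t : Fin k`). -/
def wVert (k : ℕ) (t : Fin k) : HVert k := Sum.inr (Sum.inr t)

/-- Base relation generating the edges of `H_k`:
`u_{i-1}u_i`, `v_{i-1}v_i`, and `w_i u_{i-1}, w_i u_i, w_i v_{i-1}, w_i v_i`. -/
def HRel (k : ℕ) : HVert k → HVert k → Prop
  | Sum.inl i, Sum.inl j => (i : ℕ) + 1 = j
  | Sum.inr (Sum.inl i), Sum.inr (Sum.inl j) => (i : ℕ) + 1 = j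
  | Sum.inr (Sum.inr t), Sum.inl i => (i : ℕ) = t ∨ (i : ℕ) = (t : ℕ) + 1
  | Sum.inr (Sum.inr t), Sum.inr (Sum.inl i) => (i : ℕ) = t ∨ (i : ℕ) = (t : ℕ) + 1
  | _, _ => False

/-- The graph `H_k`. -/
def Hgraph (k : ℕ) : SimpleGraph (HVert k) := SimpleGraph.fromRel (HRel k)

lemma step (k : ℕ) (c : HVert k → Fin 3)
    (hc : ∀ x y, (Hgraph k).Adj x y → c x ≠ c y) (t : Fin k) :
    c (uVert k t.castSucc) = c (vVert k t.castSucc) ↔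
    c (uVert k t.succ) = c (vVert k t.succ) := by
  have adj : ∀ x y, x ≠ y → (HRel k x y ∨ HRel k y x) → c x ≠ c y := by
    intro x y h1 h2
    exact hc x y ⟨h1, h2⟩
  have h1 : c (wVert k t) ≠ c (uVert k t.castSucc) := by
    apply adj <;> simp [wVert, uVert, HRel]
  have h2 : c (wVert k t) ≠ c (uVert k t.succ) := by
    apply adj <;> simp [wVert, uVert, HRel]
  have h3 : c (wVert k t) ≠ c (vVert k t.castSucc) := by
    apply adj <;> simp [wVert, vVert, HRel]
  have h4 : c (wVert k t) ≠ c (vVert k t.succ) := by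
    apply adj <;> simp [wVert, vVert, HRel]
  have h5 : c (uVert k t.castSucc) ≠ c (uVert k t.succ) := by
    apply adj
    · simp [uVert, Fin.ext_iff]
    · left; simp [uVert, HRel]
  have h6 : c (vVert k t.castSucc) ≠ c (vVert k t.succ) := by
    apply adj
    · simp [vVert, Fin.ext_iff]
    · left; simp [vVert, HRel]
  revert h1 h2 h3 h4 h5 h6
  generalize c (wVert k t) = a
  generalize c (uVert k t.castSucc) = b
  generalize c (uVert k t.succ) = d
  generalize c (vVert k t.castSucc) = e
  generalize c (vVert k t.succ) = f
  revert a b d e f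
  decide

/-- if a proper 3-coloring of `H_k` has `c(u_i) = c(v_i)` for some `i`,
then `c(u_j) = c(v_j)` for all `j`. -/
theorem Hk_coloring_eq_propagates (k : ℕ) (c : HVert k → Fin 3)
    (hc : ∀ x y, (Hgraph k).Adj x y → c x ≠ c y)
    (i : Fin (k+1)) (h : c (uVert k i) = c (vVert k i)) :
    ∀ j : Fin (k+1), c (uVert k j) = c (vVert k j) := by
  have key : ∀ n : Fin (k+1), (c (uVert k n) = c (vVert k n)) ↔
      (c (uVert k 0) = c (vVert k 0)) := by
    intro n
    induction n using Fin.induction with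
    | zero => rfl
    | succ t ih => rw [← (step k c hc t), ih]
  intro j
  rw [key j, ← key i]
  exact h
end

section
/- Let c be a proper 3-coloring of H_k with k ≥ 1. If c(u_i) ≠ c(v_i) for some index i with 0 ≤ i ≤ k, then all vertices w_1, …, w_k receive the same color under c, and c(u_j) ≠ c(v_j) for all j with 0 ≤ j ≤ k. -/
open SimpleGraph

lemma fin3_iff (w u u' v v' : Fin 3) (h1 : w ≠ u) (h2 : w ≠ u') (h3 : w ≠ v) (h4 : w ≠ v')
    (h5 : u ≠ u') (h6 : v ≠ v') : (u ≠ v ↔ u' ≠ v') := by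
  have := w.isLt; have := u.isLt; have := u'.isLt; have := v.isLt; have := v'.isLt
  simp only [Ne, Fin.ext_iff] at *
  omega

lemma fin3_eq (a b x y : Fin 3) (hab : a ≠ b) (h1 : x ≠ a) (h2 : x ≠ b) (h3 : y ≠ a)
    (h4 : y ≠ b) : x = y := by
  have := a.isLt; have := b.isLt; have := x.isLt; have := y.isLt
  simp only [Ne, Fin.ext_iff] at *
  omega

lemma adjH (k : ℕ) (x y : HVert k) (hne : x ≠ y) (h : HRel k x y) : (Hgraph k).Adj x y :=
  ⟨hne, Or.inl h⟩

lemma adj_wu (k : ℕ) (t : Fin k) (i : Fin (k+1)) (h : (i:ℕ) = t ∨ (i:ℕ) = (t:ℕ) + 1) :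
    (Hgraph k).Adj (wVert k t) (uVert k i) :=
  adjH k _ _ (by simp [wVert, uVert]) h

lemma adj_wv (k : ℕ) (t : Fin k) (i : Fin (k+1)) (h : (i:ℕ) = t ∨ (i:ℕ) = (t:ℕ) + 1) :
    (Hgraph k).Adj (wVert k t) (vVert k i) :=
  adjH k _ _ (by simp [wVert, vVert]) h

lemma adj_uu (k : ℕ) (t : Fin k) : (Hgraph k).Adj (uVert k t.castSucc) (uVert k t.succ) :=
  adjH k _ _ (by simp [uVert, Fin.ext_iff]) (by simp [uVert, HRel])

lemma adj_vv (k : ℕ) (t : Fin k) : (Hgraph k).Adj (vVert k t.castSucc) (vVert k t.succ) :=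
  adjH k _ _ (by simp [vVert, Fin.ext_iff]) (by simp [vVert, HRel])

/-- if a proper 3-coloring of `H_k` (`k ≥ 1`) has `c(u_i) ≠ c(v_i)` for
some `i`, then all the `w`'s get the same color and `c(u_j) ≠ c(v_j)` for all `j`. -/
theorem Hk_coloring_ne_propagates (k : ℕ) (hk : 1 ≤ k) (c : HVert k → Fin 3)
    (hc : ∀ x y, (Hgraph k).Adj x y → c x ≠ c y)
    (i : Fin (k+1)) (h : c (uVert k i) ≠ c (vVert k i)) :
    (∀ s t : Fin k, c (wVert k s) = c (wVert k t)) ∧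
    (∀ j : Fin (k+1), c (uVert k j) ≠ c (vVert k j)) := by
  have step : ∀ t : Fin k,
      (c (uVert k t.castSucc) ≠ c (vVert k t.castSucc)) ↔
      (c (uVert k t.succ) ≠ c (vVert k t.succ)) := by
    intro t
    exact fin3_iff (c (wVert k t)) _ _ _ _
      (hc _ _ (adj_wu k t _ (Or.inl (by simp))))
      (hc _ _ (adj_wu k t _ (Or.inr (by simp))))
      (hc _ _ (adj_wv k t _ (Or.inl (by simp))))
      (hc _ _ (adj_wv k t _ (Or.inr (by simp))))
      (hc _ _ (adj_uu k t)) (hc _ _ (adj_vv k t))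
  have base : ∀ n (hn : n < k + 1),
      (c (uVert k ⟨n, hn⟩) ≠ c (vVert k ⟨n, hn⟩)) ↔
      (c (uVert k ⟨0, Nat.succ_pos k⟩) ≠ c (vVert k ⟨0, Nat.succ_pos k⟩)) := by
    intro n
    induction n with
    | zero => intro hn; rfl
    | succ m ih =>
      intro hn
      have hm : m < k := by omega
      have := step ⟨m, hm⟩
      rw [show (⟨m, hm⟩ : Fin k).castSucc = ⟨m, by omega⟩ from rfl,
        show (⟨m, hm⟩ : Fin k).succ = ⟨m+1, hn⟩ from rfl] at this
      exact this.symm.trans (ih (by omega))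
  have h0 : c (uVert k ⟨0, Nat.succ_pos k⟩) ≠ c (vVert k ⟨0, Nat.succ_pos k⟩) := by
    have := base i i.isLt
    rw [show (⟨(i:ℕ), i.isLt⟩ : Fin (k+1)) = i from rfl] at this
    exact this.mp h
  have hall : ∀ j : Fin (k+1), c (uVert k j) ≠ c (vVert k j) := by
    intro j
    have := base j j.isLt
    rw [show (⟨(j:ℕ), j.isLt⟩ : Fin (k+1)) = j from rfl] at this
    exact this.mpr h0
  refine ⟨?_, hall⟩
  have wbase : ∀ n (hn : n < k), c (wVert k ⟨n, hn⟩) = c (wVert k ⟨0, hk⟩) := by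
    intro n
    induction n with
    | zero => intro hn; rfl
    | succ m ih =>
      intro hn
      have hm : m < k := by omega
      have key : c (wVert k ⟨m+1, hn⟩) = c (wVert k ⟨m, hm⟩) := by
        refine fin3_eq (c (uVert k ⟨m+1, by omega⟩)) (c (vVert k ⟨m+1, by omega⟩)) _ _
          (hall _) ?_ ?_ ?_ ?_
        · exact hc _ _ (adj_wu k ⟨m+1, hn⟩ ⟨m+1, by omega⟩ (Or.inl (by simp)))
        · exact hc _ _ (adj_wv k ⟨m+1, hn⟩ ⟨m+1, by omega⟩ (Or.inl (by simp)))
        · exact hc _ _ (adj_wu k ⟨m, hm⟩ ⟨m+1, by omega⟩ (Or.inr (by simp)))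
        · exact hc _ _ (adj_wv k ⟨m, hm⟩ ⟨m+1, by omega⟩ (Or.inr (by simp)))
      exact key.trans (ih hm)
  intro s t
  have hs := wbase s s.isLt
  have ht := wbase t t.isLt
  rw [show (⟨(s:ℕ), s.isLt⟩ : Fin k) = s from rfl] at hs
  rw [show (⟨(t:ℕ), t.isLt⟩ : Fin k) = t from rfl] at ht
  exact hs.trans ht.symm
end

section
/- For every positive integer k, the graph G_k is not 3-colorable; that is, there is no proper coloring of G_k with 3 colors, equivalently its chromatic number is at least 4. -/
open SimpleGraph

/-- Vertex type of `G_k`: the vertices of `H_{2k}` together with `x1, x2, x3, y1, y2`. -/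
abbrev GVert (k : ℕ) := HVert (2*k) ⊕ Fin 5

def x1V (k : ℕ) : GVert k := Sum.inr 0
def x2V (k : ℕ) : GVert k := Sum.inr 1
def x3V (k : ℕ) : GVert k := Sum.inr 2
def y1V (k : ℕ) : GVert k := Sum.inr 3
def y2V (k : ℕ) : GVert k := Sum.inr 4

/-- The vertex `u_i` inside `G_k`. -/
def Gu (k : ℕ) (i : Fin (2*k+1)) : GVert k := Sum.inl (uVert (2*k) i)

/-- The vertex `v_i` inside `G_k`. -/
def Gv (k : ℕ) (i : Fin (2*k+1)) : GVert k := Sum.inl (vVert (2*k) i)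

/-- The vertex `w_{t+1}` inside `G_k`. -/
def Gw (k : ℕ) (t : Fin (2*k)) : GVert k := Sum.inl (wVert (2*k) t)

/-- Base relation generating the edges of `G_k`: the edges of `H_{2k}` together with
`x_1 u_j` (`j` even), `y_1 v_j` (`j` odd), `x_1x_2, x_1x_3, x_1y_2, x_2y_1, x_2y_2,
x_2v_0, x_2x_3, x_3y_1, x_3v_{2k}, x_3u_{2k}, y_2w_1`. -/
def GRel (k : ℕ) : GVert k → GVert k → Prop
  | Sum.inl a, Sum.inl b => HRel (2*k) a b
  | Sum.inr i, Sum.inl (Sum.inl j) =>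
      (i = 0 ∧ (j : ℕ) % 2 = 0) ∨ (i = 2 ∧ (j : ℕ) = 2*k)
  | Sum.inr i, Sum.inl (Sum.inr (Sum.inl j)) =>
      (i = 3 ∧ (j : ℕ) % 2 = 1) ∨ (i = 1 ∧ (j : ℕ) = 0) ∨ (i = 2 ∧ (j : ℕ) = 2*k)
  | Sum.inr i, Sum.inl (Sum.inr (Sum.inr t)) => i = 4 ∧ (t : ℕ) = 0
  | Sum.inr i, Sum.inr j =>
      (i = 0 ∧ (j = 1 ∨ j = 2 ∨ j = 4)) ∨ (i = 1 ∧ (j = 3 ∨ j = 4 ∨ j = 2)) ∨ (i = 2 ∧ j = 3)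
  | _, _ => False

/-- The graph `G_k`. -/
def Ggraph (k : ℕ) : SimpleGraph (GVert k) := SimpleGraph.fromRel (GRel k)


set_option synthInstance.maxSize 5000 in
set_option maxHeartbeats 2000000 in
private lemma fin3_eqA : ∀ a b cc y : Fin 3, a ≠ b → a ≠ cc → b ≠ cc →
    y ≠ b → y ≠ cc → y = a := by decide

set_option synthInstance.maxSize 5000 in
set_option maxHeartbeats 2000000 in
private lemma fin3_base : ∀ a b cc u0 u1 v0 v1 w : Fin 3, a ≠ b → a ≠ cc → b ≠ cc →
    u0 ≠ u1 → v0 ≠ v1 → w ≠ u0 → w ≠ u1 → w ≠ v0 → w ≠ v1 →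
    u0 ≠ a → v0 ≠ b → v1 ≠ a → w ≠ cc →
    (u1 = a ∧ v1 = cc) ∨ (u1 = b ∧ v1 = b) ∨ (u1 = cc ∧ v1 = b) := by decide

set_option synthInstance.maxSize 5000 in
set_option maxHeartbeats 2000000 in
private lemma fin3_step1 : ∀ a b cc u u' v v' w : Fin 3, a ≠ b → a ≠ cc → b ≠ cc →
    u ≠ u' → v ≠ v' → w ≠ u → w ≠ u' → w ≠ v → w ≠ v' →
    ((u = a ∧ v = cc) ∨ (u = b ∧ v = b) ∨ (u = cc ∧ v = b)) → u' ≠ a →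
    (u' = b ∧ v' = cc) ∨ (u' = cc ∧ v' = a) ∨ (u' = cc ∧ v' = cc) := by decide

set_option synthInstance.maxSize 5000 in
set_option maxHeartbeats 2000000 in
private lemma fin3_step2 : ∀ a b cc u u' v v' w : Fin 3, a ≠ b → a ≠ cc → b ≠ cc →
    u ≠ u' → v ≠ v' → w ≠ u → w ≠ u' → w ≠ v → w ≠ v' →
    ((u = b ∧ v = cc) ∨ (u = cc ∧ v = a) ∨ (u = cc ∧ v = cc)) → v' ≠ a →
    (u' = a ∧ v' = cc) ∨ (u' = b ∧ v' = b) ∨ (u' = cc ∧ v' = b) := by decide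

set_option synthInstance.maxSize 5000 in
set_option maxHeartbeats 2000000 in
private lemma fin3_finish : ∀ a b cc u v : Fin 3, b ≠ cc →
    ((u = b ∧ v = cc) ∨ (u = cc ∧ v = a) ∨ (u = cc ∧ v = cc)) →
    u ≠ cc → v ≠ cc → False := by decide

/-- for every positive `k`, `G_k` is not 3-colorable. -/
theorem Gk_not_three_colorable (k : ℕ) (hk : 1 ≤ k) :
    ¬ ∃ c : GVert k → Fin 3, ∀ x y, (Ggraph k).Adj x y → c x ≠ c y := by
  rintro ⟨c, hc⟩
  have adj : ∀ x y : GVert k, x ≠ y → GRel k x y → c x ≠ c y := by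
    intro x y hne hrel
    exact hc x y ((SimpleGraph.fromRel_adj _ _ _).mpr ⟨hne, Or.inl hrel⟩)
  set a := c (x1V k) with ha
  set b := c (x2V k) with hb
  set cc := c (x3V k) with hcc
  have hab : a ≠ b := adj _ _ (by simp [x1V, x2V]) (Or.inl ⟨rfl, Or.inl rfl⟩)
  have hac : a ≠ cc := adj _ _ (by simp [x1V, x3V]) (Or.inl ⟨rfl, Or.inr (Or.inl rfl)⟩)
  have hbc : b ≠ cc := adj _ _ (by simp [x2V, x3V]) (Or.inr (Or.inl ⟨rfl, Or.inr (Or.inr rfl)⟩))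
  -- y1 gets color a, y2 gets color cc
  have hy1 : c (y1V k) = a := by
    refine fin3_eqA a b cc _ hab hac hbc ?_ ?_
    · exact (adj (x2V k) (y1V k) (by simp [x2V, y1V])
        (Or.inr (Or.inl ⟨rfl, Or.inl rfl⟩))).symm
    · exact (adj (x3V k) (y1V k) (by simp [x3V, y1V])
        (Or.inr (Or.inr ⟨rfl, rfl⟩))).symm
  have hy2 : c (y2V k) = cc := by
    have h1 : c (y2V k) ≠ a :=
      (adj (x1V k) (y2V k) (by simp [x1V, y2V])
        (Or.inl ⟨rfl, Or.inr (Or.inr rfl)⟩)).symm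
    have h2 : c (y2V k) ≠ b :=
      (adj (x2V k) (y2V k) (by simp [x2V, y2V])
        (Or.inr (Or.inl ⟨rfl, Or.inr (Or.inl rfl)⟩))).symm
    have := fin3_eqA cc b a (c (y2V k)) hbc.symm hac.symm (Ne.symm hab) h2 h1
    exact this
  -- edge color facts
  have hU : ∀ (i : ℕ) (h : i + 1 ≤ 2*k),
      c (Gu k ⟨i, by omega⟩) ≠ c (Gu k ⟨i+1, by omega⟩) := by
    intro i h
    refine adj _ _ ?_ ?_
    · simp [Gu, uVert, Fin.mk.injEq]
    · exact rfl
  have hV : ∀ (i : ℕ) (h : i + 1 ≤ 2*k),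
      c (Gv k ⟨i, by omega⟩) ≠ c (Gv k ⟨i+1, by omega⟩) := by
    intro i h
    refine adj _ _ ?_ ?_
    · simp [Gv, vVert, Fin.mk.injEq]
    · exact rfl
  have hWU : ∀ (t : ℕ) (ht : t < 2*k) (i : ℕ) (hi : i ≤ 2*k), (i = t ∨ i = t + 1) →
      c (Gw k ⟨t, ht⟩) ≠ c (Gu k ⟨i, by omega⟩) := by
    intro t ht i hi hor
    refine adj _ _ (by simp [Gw, wVert, Gu, uVert]) ?_
    exact hor
  have hWV : ∀ (t : ℕ) (ht : t < 2*k) (i : ℕ) (hi : i ≤ 2*k), (i = t ∨ i = t + 1) →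
      c (Gw k ⟨t, ht⟩) ≠ c (Gv k ⟨i, by omega⟩) := by
    intro t ht i hi hor
    refine adj _ _ (by simp [Gw, wVert, Gv, vVert]) ?_
    exact hor
  have hX1 : ∀ (i : ℕ) (hi : i ≤ 2*k), i % 2 = 0 → a ≠ c (Gu k ⟨i, by omega⟩) := by
    intro i hi hpar
    refine adj _ _ (by simp [x1V, Gu, uVert]) ?_
    exact Or.inl ⟨rfl, hpar⟩
  have hY1 : ∀ (i : ℕ) (hi : i ≤ 2*k), i % 2 = 1 → a ≠ c (Gv k ⟨i, by omega⟩) := by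
    intro i hi hpar
    rw [← hy1]
    refine adj _ _ (by simp [y1V, Gv, vVert]) ?_
    exact Or.inl ⟨rfl, hpar⟩
  have hkk : (1:ℕ) ≤ 2*k := by omega
  -- the invariant
  have key : ∀ (i : ℕ) (hi : i ≤ 2*k), 1 ≤ i →
      (i % 2 = 1 →
        (c (Gu k ⟨i, by omega⟩) = a ∧ c (Gv k ⟨i, by omega⟩) = cc) ∨
        (c (Gu k ⟨i, by omega⟩) = b ∧ c (Gv k ⟨i, by omega⟩) = b) ∨
        (c (Gu k ⟨i, by omega⟩) = cc ∧ c (Gv k ⟨i, by omega⟩) = b)) ∧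
      (i % 2 = 0 →
        (c (Gu k ⟨i, by omega⟩) = b ∧ c (Gv k ⟨i, by omega⟩) = cc) ∨
        (c (Gu k ⟨i, by omega⟩) = cc ∧ c (Gv k ⟨i, by omega⟩) = a) ∨
        (c (Gu k ⟨i, by omega⟩) = cc ∧ c (Gv k ⟨i, by omega⟩) = cc)) := by
    intro i
    induction i with
    | zero => intro _ h; omega
    | succ n ih =>
      intro hi _
      rcases Nat.eq_zero_or_pos n with hn | hn
      · -- base case : i = 1
        subst hn
        have hbase := fin3_base a b cc
          (c (Gu k ⟨0, by omega⟩)) (c (Gu k ⟨1, by omega⟩))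
          (c (Gv k ⟨0, by omega⟩)) (c (Gv k ⟨1, by omega⟩))
          (c (Gw k ⟨0, by omega⟩))
          hab hac hbc
          (hU 0 (by omega)) (hV 0 (by omega))
          (hWU 0 (by omega) 0 (by omega) (Or.inl rfl))
          (hWU 0 (by omega) 1 (by omega) (Or.inr rfl))
          (hWV 0 (by omega) 0 (by omega) (Or.inl rfl))
          (hWV 0 (by omega) 1 (by omega) (Or.inr rfl))
          (hX1 0 (by omega) rfl).symm
          (adj (x2V k) (Gv k ⟨0, by omega⟩) (by simp [x2V, Gv, vVert])
            (Or.inr (Or.inl ⟨rfl, rfl⟩))).symm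
          (hY1 1 (by omega) rfl).symm
          (by rw [← hy2]
              exact (adj (y2V k) (Gw k ⟨0, by omega⟩) (by simp [y2V, Gw, wVert])
                ⟨rfl, rfl⟩).symm)
        exact ⟨fun _ => hbase, fun h => absurd h (by omega)⟩
      · -- inductive step
        have ihn := ih (by omega) hn
        rcases Nat.even_or_odd n with he | ho
        · -- n even, n + 1 odd
          have hpar : n % 2 = 0 := Nat.even_iff.mp he
          have hgood := ihn.2 hpar
          have hstep := fin3_step2 a b cc
            (c (Gu k ⟨n, by omega⟩)) (c (Gu k ⟨n+1, by omega⟩))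
            (c (Gv k ⟨n, by omega⟩)) (c (Gv k ⟨n+1, by omega⟩))
            (c (Gw k ⟨n, by omega⟩))
            hab hac hbc
            (hU n (by omega)) (hV n (by omega))
            (hWU n (by omega) n (by omega) (Or.inl rfl))
            (hWU n (by omega) (n+1) (by omega) (Or.inr rfl))
            (hWV n (by omega) n (by omega) (Or.inl rfl))
            (hWV n (by omega) (n+1) (by omega) (Or.inr rfl))
            hgood
            (hY1 (n+1) (by omega) (by omega)).symm
          exact ⟨fun _ => hstep, fun h => absurd h (by omega)⟩
        · -- n odd, n + 1 even
          have hpar : n % 2 = 1 := Nat.odd_iff.mp ho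
          have hgood := ihn.1 hpar
          have hstep := fin3_step1 a b cc
            (c (Gu k ⟨n, by omega⟩)) (c (Gu k ⟨n+1, by omega⟩))
            (c (Gv k ⟨n, by omega⟩)) (c (Gv k ⟨n+1, by omega⟩))
            (c (Gw k ⟨n, by omega⟩))
            hab hac hbc
            (hU n (by omega)) (hV n (by omega))
            (hWU n (by omega) n (by omega) (Or.inl rfl))
            (hWU n (by omega) (n+1) (by omega) (Or.inr rfl))
            (hWV n (by omega) n (by omega) (Or.inl rfl))
            (hWV n (by omega) (n+1) (by omega) (Or.inr rfl))
            hgood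
            (hX1 (n+1) (by omega) (by omega)).symm
          exact ⟨fun h => absurd h (by omega), fun _ => hstep⟩
  -- conclusion at i = 2k
  have hend := (key (2*k) (le_refl _) (by omega)).2 (by omega)
  have hu2k : c (Gu k ⟨2*k, by omega⟩) ≠ cc := by
    exact (adj (x3V k) (Gu k ⟨2*k, by omega⟩) (by simp [x3V, Gu, uVert])
      (Or.inr ⟨rfl, rfl⟩)).symm
  have hv2k : c (Gv k ⟨2*k, by omega⟩) ≠ cc := by
    exact (adj (x3V k) (Gv k ⟨2*k, by omega⟩) (by simp [x3V, Gv, vVert])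
      (Or.inr (Or.inr ⟨rfl, rfl⟩))).symm
  exact fin3_finish a b cc _ _ hbc hend hu2k hv2k
end

section
/- In any proper 3-coloring c of G_k, the three mutually adjacent vertices x_1, x_2, x_3 receive pairwise distinct colors, c(y_1) = c(x_1), c(y_2) = c(x_3), and c(u_{2k}) = c(x_2). -/
open SimpleGraph

/-- in a proper 3-coloring of `G_k`, `x_1, x_2, x_3` get pairwise
distinct colors, `c(y_1) = c(x_1)`, `c(y_2) = c(x_3)`, `c(u_{2k}) = c(x_2)`. -/
theorem Gk_forced_colors (k : ℕ) (hk : 1 ≤ k) (c : GVert k → Fin 3)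
    (hc : ∀ x y, (Ggraph k).Adj x y → c x ≠ c y) :
    c (x1V k) ≠ c (x2V k) ∧ c (x1V k) ≠ c (x3V k) ∧ c (x2V k) ≠ c (x3V k) ∧
    c (y1V k) = c (x1V k) ∧ c (y2V k) = c (x3V k) ∧
    c (Gu k ⟨2 * k, by omega⟩) = c (x2V k) := by
  have adj : ∀ x y : GVert k, x ≠ y → GRel k x y → c x ≠ c y := fun x y h1 h2 =>
    hc x y (by rw [Ggraph, SimpleGraph.fromRel_adj]; exact ⟨h1, Or.inl h2⟩)
  have h12 : c (x1V k) ≠ c (x2V k) :=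
    adj _ _ (by intro h; exact absurd (Sum.inr.inj h) (by decide)) (Or.inl ⟨rfl, Or.inl rfl⟩)
  have h13 : c (x1V k) ≠ c (x3V k) :=
    adj _ _ (by intro h; exact absurd (Sum.inr.inj h) (by decide)) (Or.inl ⟨rfl, Or.inr (Or.inl rfl)⟩)
  have h23 : c (x2V k) ≠ c (x3V k) :=
    adj _ _ (by intro h; exact absurd (Sum.inr.inj h) (by decide)) (Or.inr (Or.inl ⟨rfl, Or.inr (Or.inr rfl)⟩))
  have hy1x2 : c (x2V k) ≠ c (y1V k) :=
    adj _ _ (by intro h; exact absurd (Sum.inr.inj h) (by decide)) (Or.inr (Or.inl ⟨rfl, Or.inl rfl⟩))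
  have hy1x3 : c (x3V k) ≠ c (y1V k) :=
    adj _ _ (by intro h; exact absurd (Sum.inr.inj h) (by decide)) (Or.inr (Or.inr ⟨rfl, rfl⟩))
  have hy2x1 : c (x1V k) ≠ c (y2V k) :=
    adj _ _ (by intro h; exact absurd (Sum.inr.inj h) (by decide)) (Or.inl ⟨rfl, Or.inr (Or.inr rfl)⟩)
  have hy2x2 : c (x2V k) ≠ c (y2V k) :=
    adj _ _ (by intro h; exact absurd (Sum.inr.inj h) (by decide)) (Or.inr (Or.inl ⟨rfl, Or.inr (Or.inl rfl)⟩))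
  have hux1 : c (x1V k) ≠ c (Gu k ⟨2 * k, by omega⟩) :=
    adj _ _ (by simp [x1V, Gu, uVert]) (Or.inl ⟨rfl, Nat.mul_mod_right 2 k⟩)
  have hux3 : c (x3V k) ≠ c (Gu k ⟨2 * k, by omega⟩) :=
    adj _ _ (by simp [x3V, Gu, uVert]) (Or.inr ⟨rfl, rfl⟩)
  have key : ∀ a b d e f g : Fin 3, a ≠ b → a ≠ d → b ≠ d → b ≠ e → d ≠ e →
      a ≠ f → b ≠ f → a ≠ g → d ≠ g → e = a ∧ f = d ∧ g = b := by decide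
  obtain ⟨e1, e2, e3⟩ := key _ _ _ _ _ _ h12 h13 h23 hy1x2 hy1x3 hy2x1 hy2x2 hux1 hux3
  exact ⟨h12, h13, h23, e1, e2, e3⟩
end

section
/- The graph G_k − y_2 (the induced subgraph on all vertices except y_2) is 3-colorable; explicitly, coloring x_1, y_1, and all u_j with odd j and all v_j with even j by color 1, coloring x_3 and all w_i by color 2, and all remaining vertices by color 3, is a proper 3-coloring. -/
open SimpleGraph

/-- The explicit coloring of `G_k - y_2`: color 1 (encoded `0`) on `x_1, y_1`, the odd
`u`'s and even `v`'s; color 2 (encoded `1`) on `x_3` and the `w`'s; color 3 (encoded `2`)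
on everything else. -/
def delY2Coloring (k : ℕ) : GVert k → Fin 3
  | Sum.inl (Sum.inl j) => if (j : ℕ) % 2 = 1 then 0 else 2
  | Sum.inl (Sum.inr (Sum.inl j)) => if (j : ℕ) % 2 = 0 then 0 else 2
  | Sum.inl (Sum.inr (Sum.inr _)) => 1
  | Sum.inr i => if i = 0 ∨ i = 3 then 0 else if i = 2 then 1 else 2


lemma aux_rel (k : ℕ) : ∀ x y : GVert k, x ≠ y2V k → y ≠ y2V k → GRel k x y →
    delY2Coloring k x ≠ delY2Coloring k y := by
  rintro (a|i) (b|j) hx hy h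
  · rcases a with i|i|t <;> rcases b with j|j|s <;>
      simp only [HRel, GRel] at h <;>
      simp only [delY2Coloring] <;> split_ifs <;> simp_all <;> omega
  · exact h.elim
  · simp only [y2V, ne_eq, Sum.inr.injEq] at hx
    rcases b with j|j|t <;> simp only [GRel] at h
    · rcases h with ⟨hi, hj⟩|⟨hi, hj⟩ <;> subst hi <;>
        simp [delY2Coloring, hj] <;> omega
    · rcases h with ⟨hi, hj⟩|⟨hi, hj⟩|⟨hi, hj⟩ <;> subst hi <;>
        simp [delY2Coloring, hj] <;> omega
    · exact absurd h.1 hx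
  · simp only [y2V, ne_eq, Sum.inr.injEq] at hx hy
    simp only [GRel] at h
    rcases h with ⟨hi, hj|hj|hj⟩|⟨hi, hj|hj|hj⟩|⟨hi, hj⟩ <;> subst hi <;> subst hj <;>
      first | exact absurd rfl hy | simp [delY2Coloring]

/-- `G_k - y_2` is 3-colorable, via the explicit coloring above. -/
theorem Gk_del_y2_three_colorable (k : ℕ) (hk : 1 ≤ k) :
    ∀ x y : GVert k, x ≠ y2V k → y ≠ y2V k → (Ggraph k).Adj x y →
      delY2Coloring k x ≠ delY2Coloring k y := by
  intro x y hx hy hadj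
  rcases hadj.2 with h | h
  · exact aux_rel k x y hx hy h
  · exact (aux_rel k y x hy hx h).symm
end

section
/- Every proper 3-coloring of the subgraph of G_k induced on {x_1, x_2, x_3, y_1, y_2, u_{2k}} is, up to permutation of the three colors, the coloring c(x_1)=1, c(x_2)=2, c(x_3)=3, c(y_1)=1, c(y_2)=3, c(u_{2k})=2. -/
open SimpleGraph

/-- The subgraph of `G_k` induced on `x_1, x_2, x_3, y_1, y_2, u_{2k}`
(encoded as `0, 1, 2, 3, 4, 5`), generating relation for its edges:
`x_1x_2, x_1x_3, x_2x_3, x_2y_1, x_3y_1, x_1y_2, x_2y_2, x_1u_{2k}, x_3u_{2k}`. -/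
def TRel : Fin 6 → Fin 6 → Prop := fun a b =>
  (a, b) ∈ ([(0,1), (0,2), (1,2), (1,3), (2,3), (0,4), (1,4), (0,5), (2,5)] :
    List (Fin 6 × Fin 6))

def Tgraph : SimpleGraph (Fin 6) := SimpleGraph.fromRel TRel

/-- every proper 3-coloring of this six-vertex graph satisfies
`c(y_1) = c(x_1)`, `c(y_2) = c(x_3)`, `c(u_{2k}) = c(x_2)`, with `c(x_1), c(x_2), c(x_3)`
pairwise distinct; i.e. it is, up to permutation of colors, the stated coloring. -/
theorem Tgraph_coloring_unique (c : Fin 6 → Fin 3)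
    (hc : ∀ x y, Tgraph.Adj x y → c x ≠ c y) :
    c 3 = c 0 ∧ c 4 = c 2 ∧ c 5 = c 1 ∧
    c 0 ≠ c 1 ∧ c 0 ≠ c 2 ∧ c 1 ≠ c 2 := by
  have e : ∀ x y : Fin 6, Tgraph.Adj x y → (c x).val ≠ (c y).val := fun x y h hv =>
    hc x y h (Fin.ext hv)
  have h01 := e 0 1 ⟨by decide, Or.inl (by simp [TRel])⟩
  have h02 := e 0 2 ⟨by decide, Or.inl (by simp [TRel])⟩
  have h12 := e 1 2 ⟨by decide, Or.inl (by simp [TRel])⟩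
  have h13 := e 1 3 ⟨by decide, Or.inl (by simp [TRel])⟩
  have h23 := e 2 3 ⟨by decide, Or.inl (by simp [TRel])⟩
  have h04 := e 0 4 ⟨by decide, Or.inl (by simp [TRel])⟩
  have h14 := e 1 4 ⟨by decide, Or.inl (by simp [TRel])⟩
  have h05 := e 0 5 ⟨by decide, Or.inl (by simp [TRel])⟩
  have h25 := e 2 5 ⟨by decide, Or.inl (by simp [TRel])⟩
  have b0 := (c 0).isLt; have b1 := (c 1).isLt; have b2 := (c 2).isLt
  have b3 := (c 3).isLt; have b4 := (c 4).isLt; have b5 := (c 5).isLt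
  refine ⟨Fin.ext ?_, Fin.ext ?_, Fin.ext ?_, fun h => h01 (congrArg Fin.val h),
    fun h => h02 (congrArg Fin.val h), fun h => h12 (congrArg Fin.val h)⟩ <;> omega
end
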